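/- arXiv:2006.04925 — 2 statements merged into one kernel-verified Lean document; each statement's English description precedes it below -/
import Mathlib

section
/- For every α > 0 there exists δ > 0 such that every measurable set E ⊆ ℂ with spherical area ∫_E (1+‖w‖²)⁻² dλ(w) ≥ α contains three points a, b, c ∈ E whose pairwise chordal distances satisfy min{σ(a,b), σ(a,c), σ(b,c)} ≥ δ. -/
open MeasureTheory

/-- The chordal (spherical) distance between two points of `ℂ`. -/
noncomputable def chordal (a b : ℂ) : ℝ :=
  ‖a - b‖ / (Real.sqrt (1 + ‖a‖ ^ 2) * Real.sqrt (1 + ‖b‖ ^ 2))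

/-!
Chordal balls of small radius have uniformly small spherical area: outside a large disc the
whole plane has small spherical area, and inside it a chordal `δ`-ball lies in a Euclidean disc
of radius `O(δ)`, whose spherical area is at most its Lebesgue area. If `E` contains no three
pairwise `δ`-separated points, then it is covered by two chordal `δ`-balls, centred at a point
`a ∈ E` and at a point of `E` chordally far from `a`, so its spherical area is small.
-/

open Filter Metric Topology
open scoped ENNReal

theorem exists_triple_le_min_of_not_subset_union {X : Type*} (d : X → X → ℝ) {δ : ℝ}
    {E : Set X} (hE : E.Nonempty)
    (hcover : ∀ a b, ¬ E ⊆ {w | d a w < δ} ∪ {w | d b w < δ}) :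
    ∃ a ∈ E, ∃ b ∈ E, ∃ c ∈ E, δ ≤ min (d a b) (min (d a c) (d b c)) := by
  by_contra! hsep
  obtain ⟨a, ha⟩ := hE
  by_cases hfar : ∃ b ∈ E, δ ≤ d a b
  · obtain ⟨b, hb, hab⟩ := hfar
    refine hcover a b fun c hc => ?_
    have := hsep a ha b hb c hc
    simp only [min_lt_iff] at this ⊢
    grind
  · push Not at hfar
    exact hcover a a fun c hc => Or.inl (hfar c hc)

theorem exists_pos_forall_addHaar_closedBall_le {E : Type*} [NormedAddCommGroup E]
    [MeasurableSpace E] [BorelSpace E] [ProperSpace E] (μ : Measure E) [μ.IsAddHaarMeasure]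
    [NullSingletonClass μ] {ε : ℝ≥0∞} (hε : 0 < ε) :
    ∃ ρ > 0, ∀ a, μ (closedBall a ρ) ≤ ε := by
  have hlim := tendsto_measure_cthickening_of_isCompact (μ := μ) (isCompact_singleton (x := 0))
  rw [measure_singleton] at hlim
  obtain ⟨ρ, hρε, hρ⟩ :=
    ((hlim.eventually (ge_mem_nhds hε)).filter_mono nhdsWithin_le_nhds).and
      self_mem_nhdsWithin |>.exists (f := 𝓝[>] (0 : ℝ))
  refine ⟨ρ, hρ, fun a => ?_⟩
  rwa [Measure.addHaar_closedBall_center, ← cthickening_singleton _ (le_of_lt hρ)]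

theorem exists_measure_compl_closedBall_le {X : Type*} [PseudoMetricSpace X]
    [ProperSpace X] [MeasurableSpace X] [BorelSpace X] (μ : Measure X) [IsFiniteMeasure μ]
    (x : X) {ε : ℝ≥0∞} (hε : 0 < ε) :
    ∃ r ≥ 0, μ (closedBall x r)ᶜ ≤ ε := by
  have hlim := tendsto_measure_compl_closedBall_of_isTightMeasureSet
    (isTightMeasureSet_singleton (μ := μ)) x
  simp only [Set.mem_singleton_iff, iSup_iSup_eq_left] at hlim
  exact ((hlim.eventually (ge_mem_nhds hε)).and (eventually_ge_atTop 0)).exists.imp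
    fun r hr => ⟨hr.2, hr.1⟩

theorem norm_sub_div_le_chordal (a b : ℂ) :
    ‖a - b‖ / ((1 + ‖a‖) * (1 + ‖b‖)) ≤ chordal a b := by
  have hsqrt : ∀ z : ℂ, 0 < √(1 + ‖z‖ ^ 2) ∧ √(1 + ‖z‖ ^ 2) ≤ 1 + ‖z‖ := fun z =>
    ⟨by positivity, Real.sqrt_le_iff.2 ⟨by positivity, by nlinarith [norm_nonneg z]⟩⟩
  obtain ⟨ha0, ha⟩ := hsqrt a
  obtain ⟨hb0, hb⟩ := hsqrt b
  unfold chordal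
  gcongr

theorem norm_sub_le_of_chordal_le {a w : ℂ} {r δ : ℝ} (hw : ‖w‖ ≤ r) (hδ : δ * (1 + r) ≤ 1 / 2)
    (h : chordal a w ≤ δ) : ‖a - w‖ ≤ 2 * δ * (1 + r) ^ 2 := by
  have hr : 0 ≤ 1 + r := by linarith [norm_nonneg w]
  have hδ0 : 0 ≤ δ := le_trans (by unfold chordal; positivity) h
  have ha : 1 + ‖a‖ ≤ (1 + r) + ‖a - w‖ := by linarith [norm_le_norm_add_norm_sub' a w]
  have hlin : ‖a - w‖ ≤ δ * (((1 + r) + ‖a - w‖) * (1 + r)) :=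
    ((div_le_iff₀ (by positivity)).1 ((norm_sub_div_le_chordal a w).trans h)).trans (by gcongr)
  nlinarith [mul_le_mul_of_nonneg_right hδ (norm_nonneg (a - w))]

theorem exists_pos_forall_measure_setOf_chordal_lt_le (ν : Measure ℂ) [IsFiniteMeasure ν]
    (hν : ν ≤ volume) {ε : ℝ≥0∞} (hε : 0 < ε) :
    ∃ δ > 0, ∀ a, ν {w | chordal a w < δ} ≤ ε := by
  obtain ⟨r, hr, htail⟩ := exists_measure_compl_closedBall_le ν 0 (ENNReal.half_pos hε.ne')
  obtain ⟨ρ, hρ, hball⟩ :=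
    exists_pos_forall_addHaar_closedBall_le (volume : Measure ℂ) (ENNReal.half_pos hε.ne')
  set δ := min (1 / (2 * (1 + r))) (ρ / (2 * (1 + r) ^ 2))
  have hδr : δ * (1 + r) ≤ 1 / 2 := by
    calc δ * (1 + r) ≤ 1 / (2 * (1 + r)) * (1 + r) := by gcongr; exact min_le_left _ _
      _ = 1 / 2 := by field_simp
  have hδρ : 2 * δ * (1 + r) ^ 2 ≤ ρ := by
    calc 2 * δ * (1 + r) ^ 2 ≤ 2 * (ρ / (2 * (1 + r) ^ 2)) * (1 + r) ^ 2 := by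
          gcongr; exact min_le_right _ _
      _ = ρ := by field_simp
  refine ⟨δ, by positivity, fun a => ?_⟩
  have hsub : {w | chordal a w < δ} ⊆ closedBall a ρ ∪ (closedBall 0 r)ᶜ := by
    intro w hw
    by_cases hwr : ‖w‖ ≤ r
    · left
      rw [mem_closedBall, dist_comm, dist_eq_norm]
      exact (norm_sub_le_of_chordal_le hwr hδr (le_of_lt hw)).trans hδρ
    · right
      simpa using hwr
  calc ν {w | chordal a w < δ} ≤ ν (closedBall a ρ) + ν (closedBall 0 r)ᶜ :=
        (measure_mono hsub).trans (measure_union_le _ _)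
    _ ≤ ε / 2 + ε / 2 := add_le_add ((Measure.le_iff'.1 hν _).trans (hball a)) htail
    _ = ε := ENNReal.add_halves ε

noncomputable def sphericalMeasure : Measure ℂ :=
  volume.withDensity fun w => ENNReal.ofReal ((1 + ‖w‖ ^ 2) ^ 2)⁻¹

theorem integrable_inv_one_add_norm_sq_sq :
    Integrable (fun w : ℂ => ((1 + ‖w‖ ^ 2) ^ 2)⁻¹) volume := by
  have h := integrable_rpow_neg_one_add_norm_sq (E := ℂ) (μ := volume) (r := 4)
    (by norm_num [Complex.finrank_real_complex])
  convert h using 2 with w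
  rw [show (-4 / 2 : ℝ) = -2 by norm_num, Real.rpow_neg (by positivity), Real.rpow_two]

instance : IsFiniteMeasure sphericalMeasure :=
  isFiniteMeasure_withDensity_ofReal integrable_inv_one_add_norm_sq_sq.hasFiniteIntegral

theorem sphericalMeasure_le_volume : sphericalMeasure ≤ volume := by
  refine (withDensity_mono (ae_of_all _ fun w => ?_)).trans withDensity_one.le
  exact ENNReal.ofReal_le_one.2 (inv_le_one_of_one_le₀ (by nlinarith [norm_nonneg w]))

theorem setIntegral_inv_one_add_norm_sq_sq {E : Set ℂ} (hE : MeasurableSet E) :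
    ∫ w in E, ((1 + ‖w‖ ^ 2) ^ 2)⁻¹ = (sphericalMeasure E).toReal := by
  rw [sphericalMeasure, withDensity_apply _ hE, integral_eq_lintegral_of_nonneg_ae
    (ae_of_all _ fun w => by positivity) (by fun_prop)]

theorem stmt_3 (α : ℝ) (hα : 0 < α) :
    ∃ δ > (0 : ℝ), ∀ E : Set ℂ, MeasurableSet E →
      α ≤ ∫ w in E, ((1 + ‖w‖ ^ 2) ^ 2)⁻¹ →
      ∃ a ∈ E, ∃ b ∈ E, ∃ c ∈ E,
        δ ≤ min (chordal a b) (min (chordal a c) (chordal b c)) := by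
  obtain ⟨δ, hδ, hsmall⟩ := exists_pos_forall_measure_setOf_chordal_lt_le sphericalMeasure
    sphericalMeasure_le_volume (ENNReal.ofReal_pos.2 (by positivity : 0 < α / 3))
  refine ⟨δ, hδ, fun E hE hαE => ?_⟩
  rw [setIntegral_inv_one_add_norm_sq_sq hE] at hαE
  have hne : E.Nonempty := by
    refine nonempty_of_measure_ne_zero (μ := sphericalMeasure) fun h0 => ?_
    rw [h0, ENNReal.toReal_zero] at hαE
    linarith
  refine exists_triple_le_min_of_not_subset_union chordal hne fun a b hab => ?_
  have hEab : sphericalMeasure E ≤ ENNReal.ofReal (α / 3) + ENNReal.ofReal (α / 3) :=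
    ((measure_mono hab).trans (measure_union_le _ _)).trans (add_le_add (hsmall a) (hsmall b))
  rw [← ENNReal.ofReal_add (by positivity) (by positivity)] at hEab
  linarith [ENNReal.toReal_le_of_le_ofReal (by positivity) hEab]
end

section
/- Let α > 0 and let E ⊆ ℂ be a measurable set with Lebesgue measure λ(E) ≥ α. Then there exist three points a, b, c ∈ E whose pairwise Euclidean distances satisfy min{‖a−b‖, ‖a−c‖, ‖b−c‖} ≥ Real.sqrt (α/(2π)). -/
/-!
Put `r = √(α / (2π))`, so that an open disk of radius `r` has area `α / 2`. If `E` has no three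
points at mutual distance `≥ r`, a greedy choice covers `E` by two open disks of radius `r`. As
`λ(E) ≥ α`, `E` then has full measure in one of these disks, so it is dense there; the disk contains
three points at mutual distance `> 1.1 r`, and points of `E` close to them are `r`-separated.
-/

open MeasureTheory Metric Set

section Metric

variable {X : Type*} [PseudoMetricSpace X]

theorem exists_separated_triple_or_subset_union_ball [Nonempty X] (E : Set X) (r : ℝ) :
    (∃ a ∈ E, ∃ b ∈ E, ∃ c ∈ E, r ≤ dist a b ∧ r ≤ dist a c ∧ r ≤ dist b c) ∨
      ∃ x y : X, E ⊆ ball x r ∪ ball y r := by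
  rcases E.eq_empty_or_nonempty with rfl | ⟨a, ha⟩
  · exact Or.inr ⟨Classical.arbitrary X, Classical.arbitrary X, empty_subset _⟩
  by_cases hfar : ∃ b ∈ E, r ≤ dist a b
  · obtain ⟨b, hb, hab⟩ := hfar
    by_cases hfar' : ∃ c ∈ E, r ≤ dist a c ∧ r ≤ dist b c
    · obtain ⟨c, hc, hac, hbc⟩ := hfar'
      exact Or.inl ⟨a, ha, b, hb, c, hc, hab, hac, hbc⟩
    push Not at hfar'
    refine Or.inr ⟨a, b, fun x hx => ?_⟩
    by_cases hax : r ≤ dist a x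
    · exact Or.inr (mem_ball'.2 (hfar' x hx hax))
    · exact Or.inl (mem_ball'.2 (not_le.1 hax))
  · push Not at hfar
    exact Or.inr ⟨a, a, fun x hx => Or.inl (mem_ball'.2 (hfar x hx))⟩

theorem exists_separated_triple_of_mem_closure {E : Set X} {x y z : X} {r δ : ℝ} (hδ : 0 < δ)
    (hx : x ∈ closure E) (hy : y ∈ closure E) (hz : z ∈ closure E)
    (hxy : r + 2 * δ ≤ dist x y) (hxz : r + 2 * δ ≤ dist x z) (hyz : r + 2 * δ ≤ dist y z) :
    ∃ a ∈ E, ∃ b ∈ E, ∃ c ∈ E, r ≤ dist a b ∧ r ≤ dist a c ∧ r ≤ dist b c := by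
  obtain ⟨a, ha, hxa⟩ := mem_closure_iff.1 hx δ hδ
  obtain ⟨b, hb, hyb⟩ := mem_closure_iff.1 hy δ hδ
  obtain ⟨c, hc, hzc⟩ := mem_closure_iff.1 hz δ hδ
  refine ⟨a, ha, b, hb, c, hc, ?_, ?_, ?_⟩
  · linarith [dist_triangle4 x a b y, dist_comm b y]
  · linarith [dist_triangle4 x a c z, dist_comm c z]
  · linarith [dist_triangle4 y b c z, dist_comm c z]

end Metric

theorem IsOpen.subset_closure_of_ae_le {X : Type*} [TopologicalSpace X] [MeasurableSpace X]
    {μ : Measure X} [μ.IsOpenPosMeasure] {U E : Set X} (hU : IsOpen U) (h : U ≤ᵐ[μ] E) :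
    U ⊆ closure E := by
  have hnull : μ (U \ closure E) = 0 :=
    measure_mono_null (sdiff_subset_sdiff_right subset_closure) (ae_le_set.1 h)
  exact sdiff_eq_empty.1 ((hU.sdiff isClosed_closure).measure_eq_zero_iff μ |>.1 hnull)

theorem ae_le_of_subset_union_of_measure_add_le {X : Type*} [MeasurableSpace X] {μ : Measure X}
    {E s t : Set X} (hE : NullMeasurableSet E μ) (hs : μ s ≠ ⊤) (ht : μ t ≠ ⊤)
    (hsub : E ⊆ s ∪ t) (hle : μ s + μ t ≤ μ E) : t ≤ᵐ[μ] E := by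
  have hfin : μ E ≠ ⊤ := ne_top_of_le_ne_top (ENNReal.add_ne_top.2 ⟨hs, ht⟩)
    ((measure_mono hsub).trans (measure_union_le s t))
  refine ae_le_set.2 (nonpos_iff_eq_zero.1 ?_)
  calc μ (t \ E) ≤ μ ((s ∪ t) \ E) := measure_mono (sdiff_subset_sdiff_left subset_union_right)
    _ = μ (s ∪ t) - μ E := measure_sdiff hsub hE hfin
    _ ≤ μ s + μ t - μ E := tsub_le_tsub_right (measure_union_le s t) _
    _ = 0 := tsub_eq_zero_of_le hle

namespace Complex

theorem exists_separated_triple_of_ball_subset_closure {E : Set ℂ} {x : ℂ} {r : ℝ} (hr : 0 < r)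
    (h : ball x r ⊆ closure E) :
    ∃ a ∈ E, ∃ b ∈ E, ∃ c ∈ E, r ≤ dist a b ∧ r ≤ dist a c ∧ r ≤ dist b c := by
  set t : ℝ := 9 * r / 10 with ht_def
  have ht : 0 < t := by positivity
  have hmem : ∀ w : ℂ, ‖w‖ = 1 → x + t * w ∈ closure E := fun w hw => h <| by
    rw [mem_ball, dist_self_add_left, norm_mul, hw, mul_one, norm_real, Real.norm_of_nonneg ht.le]
    linarith
  have hdist : ∀ w w' : ℂ, dist (x + t * w) (x + t * w') = t * ‖w - w'‖ := fun w w' => by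
    rw [dist_add_left, dist_eq_norm, ← mul_sub, norm_mul, norm_real, Real.norm_of_nonneg ht.le]
  have h₁ : ‖(1 : ℂ) - -1‖ = 2 := by norm_num
  have h₂ : ‖(1 : ℂ) - I‖ = √2 := by norm_num [norm_eq_sqrt_sq_add_sq]
  have h₃ : ‖(-1 : ℂ) - I‖ = √2 := by norm_num [norm_eq_sqrt_sq_add_sq]
  have hsqrt2 : 11 / 9 ≤ √2 := Real.le_sqrt_of_sq_le (by norm_num)
  refine exists_separated_triple_of_mem_closure (δ := r / 20) (by positivity)
    (hmem 1 (by simp)) (hmem (-1) (by simp)) (hmem I (by simp)) ?_ ?_ ?_ <;>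
  · simp only [hdist, h₁, h₂, h₃]
    nlinarith

theorem volume_ball_sqrt_div_pi (x : ℂ) {β : ℝ} (hβ : 0 ≤ β) :
    volume (ball x √(β / Real.pi)) = ENNReal.ofReal β := by
  rw [volume_ball, ← ENNReal.ofReal_pow (Real.sqrt_nonneg _), Real.sq_sqrt (by positivity),
    ← ENNReal.ofReal_coe_nnreal, NNReal.coe_real_pi, ← ENNReal.ofReal_mul (by positivity),
    div_mul_cancel₀ _ Real.pi_ne_zero]

end Complex

theorem stmt_4 (α : ℝ) (hα : 0 < α) (E : Set ℂ) (hE : MeasurableSet E)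
    (hmeas : ENNReal.ofReal α ≤ volume E) :
    ∃ a ∈ E, ∃ b ∈ E, ∃ c ∈ E,
      Real.sqrt (α / (2 * Real.pi)) ≤ min ‖a - b‖ (min ‖a - c‖ ‖b - c‖) := by
  set r := √(α / 2 / Real.pi)
  have hball : ∀ x : ℂ, volume (ball x r) = ENNReal.ofReal (α / 2) := fun x =>
    Complex.volume_ball_sqrt_div_pi x (by positivity)
  simp only [le_min_iff, ← dist_eq_norm, ← div_div]
  rcases exists_separated_triple_or_subset_union_ball E r with hsep | ⟨x, y, hcover⟩
  · exact hsep
  have hae : ball y r ≤ᵐ[volume] E := by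
    refine ae_le_of_subset_union_of_measure_add_le hE.nullMeasurableSet
      measure_ball_lt_top.ne measure_ball_lt_top.ne hcover ?_
    rwa [hball, hball, ← ENNReal.ofReal_add (by positivity) (by positivity), add_halves]
  exact Complex.exists_separated_triple_of_ball_subset_closure (by positivity)
    (isOpen_ball.subset_closure_of_ae_le hae)
end
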